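/- arXiv:1706.02690 — 2 statements merged into one kernel-verified Lean document; each statement's English description precedes it below -/
import Mathlib

section
/- For fixed f ∈ ℝ^N (N ≥ 2) and index ŷ maximizing f, the limit as T → ∞ of T·(N − 1/S_ŷ(f;T)) equals Σ_{i≠ŷ} (f_ŷ − f_i), i.e. (N−1)·U₁, where U₁ = (1/(N−1)) Σ_{i≠ŷ} (f_ŷ − f_i). -/
open Filter Finset

/-- The difference quotient of `s ↦ exp (x * s)` at `0`, sampled along `s = T⁻¹ → 0⁺`. -/
theorem Real.tendsto_mul_exp_div_sub_one_atTop (x : ℝ) :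
    Tendsto (fun T : ℝ => T * (Real.exp (x / T) - 1)) atTop (nhds x) := by
  have hderiv : HasDerivAt (fun s => Real.exp (x * s)) x 0 := by
    simpa using ((hasDerivAt_id 0).const_mul x).exp
  refine (hderiv.tendsto_slope_zero_right.comp tendsto_inv_atTop_nhdsGT_zero).congr fun T => ?_
  simp [div_eq_mul_inv]

theorem temperature_scaled_softmax_limit_general (N : ℕ) (f : Fin N → ℝ)
    (y : Fin N) :
    Tendsto
      (fun T : ℝ =>
        T * (N - 1 / (1 / (1 + ∑ i ∈ Finset.univ.erase y, Real.exp ((f i - f y) / T)))))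
      atTop (nhds (∑ i ∈ Finset.univ.erase y, (f y - f i))) := by
  have hterm : ∀ i, Tendsto (fun T : ℝ => -(T * (Real.exp ((f i - f y) / T) - 1)))
      atTop (nhds (f y - f i)) := fun i => by
    simpa using (Real.tendsto_mul_exp_div_sub_one_atTop (f i - f y)).neg
  have hcard : ((univ.erase y).card : ℝ) + 1 = N := by
    exact_mod_cast (card_erase_add_one (mem_univ y)).trans (card_fin N)
  refine (tendsto_finsetSum _ fun i _ => hterm i).congr fun T => ?_
  rw [one_div_one_div, ← hcard]
  simp only [sum_neg_distrib, ← mul_sum, sum_sub_distrib, sum_const, nsmul_eq_mul, mul_one]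
  ring

theorem temperature_scaled_softmax_limit (N : ℕ) (hN : 2 ≤ N) (f : Fin N → ℝ)
    (y : Fin N) (hmax : ∀ i, f i ≤ f y) :
    Tendsto
      (fun T : ℝ =>
        T * (N - 1 / (1 / (1 + ∑ i ∈ Finset.univ.erase y, Real.exp ((f i - f y) / T)))))
      atTop (nhds (∑ i ∈ Finset.univ.erase y, (f y - f i))) :=
  temperature_scaled_softmax_limit_general N f y
end

section
/- For fixed f ∈ ℝ^N and argmax index ŷ, the second-order expansion S_ŷ(f;T) = 1/(N − ((N−1)/T)·U₁ + ((N−1)/(2T²))·U₂ + r(T)) holds with T²·r(T) → 0 as T → ∞; equivalently, Σ_{j} exp((f_j − f_ŷ)/T) = N − ((N−1)/T)U₁ + ((N−1)/(2T²))U₂ + o(1/T²). -/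
/-!
Each summand is `exp (a / T)` with `a = f j - f y`, and its second-order Taylor remainder is
`O((a / T)^3)`, so `T²` times it is `O(1 / T) → 0`. Summing the Taylor polynomials gives
`N + (∑ a) / T + (∑ a²) / (2T²)`, and `∑ a = -(N - 1) U₁`, `∑ a² = (N - 1) U₂` because the `j = y`
term vanishes.
-/

open Filter Finset Real Asymptotics
open scoped Nat

theorem tendsto_sq_mul_exp_div_sub_taylor_two (c : ℝ) :
    Tendsto (fun T : ℝ => T ^ 2 * (exp (c / T) - ∑ i ∈ range 3, (c / T) ^ i / i !))
      atTop (nhds 0) := by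
  have hcT : Tendsto (fun T : ℝ => c / T) atTop (nhds 0) :=
    tendsto_const_nhds.div_atTop tendsto_id
  have hO : (fun T : ℝ => T ^ 2 * (exp (c / T) - ∑ i ∈ range 3, (c / T) ^ i / i !))
      =O[atTop] fun T => T ^ 2 * (c / T) ^ 3 :=
    (isBigO_refl _ _).mul ((exp_sub_sum_range_isBigO_pow 3).comp_tendsto hcT)
  have hlim : Tendsto (fun T : ℝ => c ^ 2 * (c / T)) atTop (nhds 0) := by
    simpa using hcT.const_mul (c ^ 2)
  refine hO.trans_tendsto (hlim.congr' ?_)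
  filter_upwards [eventually_ne_atTop 0] with T hT
  field_simp

theorem sum_sq_mul_exp_div_sub_taylor_two {ι : Type*} [Fintype ι] (a : ι → ℝ) {T : ℝ}
    (hT : T ≠ 0) :
    ∑ j, T ^ 2 * (exp (a j / T) - ∑ i ∈ range 3, (a j / T) ^ i / i !) =
      T ^ 2 * (∑ j, exp (a j / T) -
        (Fintype.card ι + (∑ j, a j) / T + (∑ j, a j ^ 2) / (2 * T ^ 2))) := by
  have hterm : ∀ j, T ^ 2 * (exp (a j / T) - ∑ i ∈ range 3, (a j / T) ^ i / i !) =
      T ^ 2 * exp (a j / T) - T ^ 2 - T * a j - a j ^ 2 / 2 := by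
    intro j
    simp only [sum_range_succ, sum_range_zero]
    field_simp
    ring
  simp only [hterm, sum_sub_distrib, sum_const, nsmul_eq_mul, ← mul_sum, ← sum_div]
  rw [Finset.card_univ]
  generalize ∑ j, exp (a j / T) = E
  field_simp
  ring

theorem softmax_second_order_expansion_general (N : ℕ) (hN : 2 ≤ N) (f : Fin N → ℝ)
    (y : Fin N) :
    Tendsto
      (fun T : ℝ =>
        T ^ 2 *
          ((∑ j, Real.exp ((f j - f y) / T)) -
            ((N : ℝ)
              - (((N : ℝ) - 1) / T) *
                  ((1 / ((N : ℝ) - 1)) * ∑ i ∈ Finset.univ.erase y, (f y - f i))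
              + (((N : ℝ) - 1) / (2 * T ^ 2)) *
                  ((1 / ((N : ℝ) - 1)) * ∑ i ∈ Finset.univ.erase y, (f y - f i) ^ 2))))
      atTop (nhds 0) := by
  have hN1 : (N : ℝ) - 1 ≠ 0 := by
    have : (2 : ℝ) ≤ N := by exact_mod_cast hN
    linarith
  have hsum : ∑ i ∈ univ.erase y, (f y - f i) = -∑ j, (f j - f y) := by
    rw [sum_erase _ (sub_self _), ← sum_neg_distrib]
    simp only [neg_sub]
  have hsum_sq : ∑ i ∈ univ.erase y, (f y - f i) ^ 2 = ∑ j, (f j - f y) ^ 2 := by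
    rw [sum_erase _ (by simp)]
    simp only [← neg_sub (f _) (f y), neg_sq]
  have hterms := tendsto_finsetSum univ fun j _ =>
    tendsto_sq_mul_exp_div_sub_taylor_two (f j - f y)
  rw [sum_const_zero] at hterms
  refine hterms.congr' ?_
  filter_upwards [eventually_ne_atTop 0] with T hT
  rw [sum_sq_mul_exp_div_sub_taylor_two _ hT, hsum, hsum_sq, Fintype.card_fin]
  field_simp
  ring

theorem softmax_second_order_expansion (N : ℕ) (hN : 2 ≤ N) (f : Fin N → ℝ)
    (y : Fin N) (hmax : ∀ i, f i ≤ f y) :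
    Tendsto
      (fun T : ℝ =>
        T ^ 2 *
          ((∑ j, Real.exp ((f j - f y) / T)) -
            ((N : ℝ)
              - (((N : ℝ) - 1) / T) *
                  ((1 / ((N : ℝ) - 1)) * ∑ i ∈ Finset.univ.erase y, (f y - f i))
              + (((N : ℝ) - 1) / (2 * T ^ 2)) *
                  ((1 / ((N : ℝ) - 1)) * ∑ i ∈ Finset.univ.erase y, (f y - f i) ^ 2))))
      atTop (nhds 0) :=
  softmax_second_order_expansion_general N hN f y
end
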